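/- Let β: [0,1] → ℝ^p be continuous with image spanning an r-dimensional subspace. Then for all sufficiently large M, the p × M matrix B whose m-th column is β(m/M) has rank exactly r. -/

import Mathlib

open Module Set Submodule Matrix

theorem grid_approx (M : ℕ) (hM : 1 ≤ M) (t : ℝ) (ht : t ∈ Set.Icc (0:ℝ) 1) :
    ∃ k : ℕ, k < M ∧ ((k:ℝ)+1)/M ∈ Set.Icc (0:ℝ) 1 ∧ |((k:ℝ)+1)/M - t| ≤ 1/M := by
  have hM0 : (0:ℝ) < M := by exact_mod_cast hM
  by_cases h : ⌊t * M⌋₊ ≤ M - 1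
  · have hk1 : ((⌊t * M⌋₊:ℕ):ℝ) + 1 ≤ M := by exact_mod_cast (by omega : ⌊t*M⌋₊ + 1 ≤ M)
    have h1 : t * M < ⌊t * M⌋₊ + 1 := Nat.lt_floor_add_one _
    have h2 : (⌊t * M⌋₊ : ℝ) ≤ t * M := Nat.floor_le (by nlinarith [ht.1])
    refine ⟨⌊t * M⌋₊, by omega, ⟨by positivity, by rw [div_le_one hM0]; linarith⟩, ?_⟩
    rw [abs_le]
    have hle : t ≤ ((⌊t*M⌋₊:ℝ)+1)/M := by rw [le_div_iff₀ hM0]; linarith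
    have hpos : (0:ℝ) < 1/M := by positivity
    constructor
    · linarith
    · rw [div_sub' hM0.ne', div_le_div_iff₀ hM0 hM0]; nlinarith
  · have ht1 : t = 1 := by
      have hMf : (M:ℝ) ≤ (⌊t * M⌋₊ : ℝ) := by exact_mod_cast (by omega : M ≤ ⌊t * M⌋₊)
      have : (M:ℝ) ≤ t * M := hMf.trans (Nat.floor_le (by nlinarith [ht.1]))
      nlinarith [ht.2]
    have hMc : ((M - 1 : ℕ) : ℝ) + 1 = M := by push_cast [Nat.cast_sub hM]; ring
    subst ht1
    refine ⟨M - 1, by omega, ?_, ?_⟩ <;> rw [hMc, div_self hM0.ne']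
    · exact ⟨zero_le_one, le_refl 1⟩
    · simp

theorem indep_nbhd (p r : ℕ) (β : ℝ → EuclideanSpace ℝ (Fin p))
    (hcont : ContinuousOn β (Set.Icc 0 1))
    (τ : Fin r → ℝ) (hτmem : ∀ i, τ i ∈ Set.Icc (0:ℝ) 1)
    (hindep : LinearIndependent ℝ (fun i : Fin r => β (τ i))) :
    ∃ ε > 0, ∀ u : Fin r → ℝ, (∀ i, u i ∈ Set.Icc (0:ℝ) 1) → (∀ i, dist (u i) (τ i) < ε) →
      LinearIndependent ℝ (fun i : Fin r => β (u i)) := by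
  classical
  have hO : IsOpen { f : Fin r → EuclideanSpace ℝ (Fin p) | LinearIndependent ℝ f } :=
    isOpen_setOf_linearIndependent
  set S : Set (Fin r → ℝ) := Set.univ.pi fun _ => Set.Icc (0:ℝ) 1 with hS
  have hg : ContinuousOn (fun (u : Fin r → ℝ) (i : Fin r) => β (u i)) S := by
    apply continuousOn_pi.2
    intro i
    exact hcont.comp (continuous_apply i).continuousOn fun u hu => hu i trivial
  have hτS : τ ∈ S := fun i _ => hτmem i
  have hmem : (fun (u : Fin r → ℝ) (i : Fin r) => β (u i)) ⁻¹' { f | LinearIndependent ℝ f }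
      ∈ nhdsWithin τ S := (hg τ hτS).preimage_mem_nhdsWithin (hO.mem_nhds hindep)
  rw [mem_nhdsWithin] at hmem
  obtain ⟨U, hUopen, hτU, hUsub⟩ := hmem
  obtain ⟨ε, hε, hball⟩ := Metric.isOpen_iff.1 hUopen τ hτU
  refine ⟨ε, hε, fun u hu hdist => ?_⟩
  have huU : u ∈ U := hball (by
    rcases Nat.eq_zero_or_pos r with hr | hr
    · subst hr; simpa [Metric.mem_ball, Subsingleton.elim u τ] using hε
    · haveI : Nonempty (Fin r) := Fin.pos_iff_nonempty.1 hr
      rw [Metric.mem_ball, dist_pi_lt_iff hε]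
      exact hdist)
  exact hUsub ⟨huU, fun i _ => hu i⟩

theorem rank_aux (p r M : ℕ) (β : ℝ → EuclideanSpace ℝ (Fin p))
    (hrank : Module.finrank ℝ (Submodule.span ℝ (β '' Set.Icc 0 1)) = r)
    (c : Fin r → Fin M)
    (hLI : LinearIndependent ℝ (fun i : Fin r => β (((c i : ℕ) + 1 : ℝ)/M))) (hM : 1 ≤ M) :
    (Matrix.of fun (i : Fin p) (m : Fin M) =>
        β (((m : ℕ) + 1 : ℝ) / (M : ℝ)) i).rank = r := by
  classical
  set e := WithLp.linearEquiv 2 ℝ (Fin p → ℝ) with he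
  set B := Matrix.of fun (i : Fin p) (m : Fin M) => β (((m : ℕ) + 1 : ℝ) / (M : ℝ)) i with hB
  have hcol : ∀ m : Fin M, Bᵀ m = e (β (((m : ℕ) + 1 : ℝ) / (M : ℝ))) := fun m => rfl
  rw [Matrix.rank_eq_finrank_span_cols]
  apply le_antisymm
  · have hsub : Submodule.span ℝ (Set.range Bᵀ) ≤
        (Submodule.span ℝ (β '' Set.Icc 0 1)).map
          (e : EuclideanSpace ℝ (Fin p) →ₗ[ℝ] (Fin p → ℝ)) := by
      rw [Submodule.span_le]
      rintro _ ⟨m, rfl⟩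
      rw [hcol]
      exact Submodule.mem_map_of_mem (Submodule.subset_span ⟨_, ⟨by positivity, by
        rw [div_le_one (by exact_mod_cast hM : (0:ℝ) < M)]
        · exact_mod_cast Nat.succ_le_of_lt m.2⟩, rfl⟩)
    exact le_trans (Submodule.finrank_mono hsub)
      (by rw [LinearEquiv.finrank_map_eq]; exact hrank.le)
  · have hLI' : LinearIndependent ℝ (fun i : Fin r => Bᵀ (c i)) := by
      have := hLI.map' (e : EuclideanSpace ℝ (Fin p) →ₗ[ℝ] (Fin p → ℝ)) e.ker
      exact this
    calc r = Module.finrank ℝ (Submodule.span ℝ (Set.range fun i : Fin r => Bᵀ (c i))) := by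
          rw [finrank_span_eq_card hLI']; simp
      _ ≤ Module.finrank ℝ (Submodule.span ℝ (Set.range Bᵀ)) := by
          apply Submodule.finrank_mono
          exact Submodule.span_mono (Set.range_comp_subset_range c Bᵀ)

/-- If β : [0,1] → ℝ^p is continuous with image spanning an
r-dimensional subspace, then for all sufficiently large M the p × M matrix B
whose m-th column is β(m/M) has rank exactly r. -/
theorem stmt2 (p r : ℕ) (β : ℝ → EuclideanSpace ℝ (Fin p))
    (hcont : ContinuousOn β (Set.Icc 0 1))
    (hrank : Module.finrank ℝ (Submodule.span ℝ (β '' Set.Icc 0 1)) = r) :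
    ∃ M₀ : ℕ, ∀ M : ℕ, M₀ ≤ M →
      (Matrix.of fun (i : Fin p) (m : Fin M) =>
        β (((m : ℕ) + 1 : ℝ) / (M : ℝ)) i).rank = r := by
  classical
  obtain ⟨s, hsub, hspan, hind⟩ := exists_linearIndependent ℝ (β '' Set.Icc (0:ℝ) 1)
  have hsfin : s.Finite := hind.set_finite_of_isNoetherian
  haveI := hsfin.fintype
  have hcard : s.toFinset.card = r := by
    rw [← finrank_span_set_eq_card hind, hspan, hrank]
  have e : Fin r ≃ s := (Fintype.equivFinOfCardEq (by simpa using hcard)).symm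
  have hτ : ∀ i : Fin r, ∃ x ∈ Set.Icc (0:ℝ) 1, β x = (e i : EuclideanSpace ℝ (Fin p)) :=
    fun i => hsub (e i).2
  choose τ hτmem hτβ using hτ
  have hindep : LinearIndependent ℝ (fun i : Fin r => β (τ i)) := by
    have : (fun i : Fin r => β (τ i)) = (fun x : s => (x : EuclideanSpace ℝ (Fin p))) ∘ e := by
      funext i; simp [hτβ]
    rw [this]
    exact hind.comp e e.injective
  obtain ⟨ε, hε, hεind⟩ := indep_nbhd p r β hcont τ hτmem hindep
  obtain ⟨N, hN⟩ := exists_nat_gt (1/ε)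
  refine ⟨N + 1, fun M hM => ?_⟩
  have hM1 : 1 ≤ M := le_trans (Nat.le_add_left 1 N) hM
  have hM0 : (0:ℝ) < M := by exact_mod_cast hM1
  have hMε : (1:ℝ)/M < ε := by
    have hNM : ((N:ℝ)) < M := by exact_mod_cast Nat.lt_of_lt_of_le (Nat.lt_succ_self N) hM
    have h1 : 1/ε < (M:ℝ) := hN.trans hNM
    rw [div_lt_iff₀ hM0]
    have := (div_lt_iff₀ hε).1 h1
    linarith
  choose k hk hkmem hkdist using fun i => grid_approx M hM1 (τ i) (hτmem i)
  set c : Fin r → Fin M := fun i => ⟨k i, hk i⟩ with hc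
  have hLI : LinearIndependent ℝ (fun i : Fin r => β (((c i : ℕ) + 1 : ℝ)/M)) := by
    apply hεind
    · exact fun i => hkmem i
    · intro i
      rw [Real.dist_eq]
      exact lt_of_le_of_lt (hkdist i) hMε
  exact rank_aux p r M β hrank c hLI hM1
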